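/- Let Q_1,...,Q_r be finite generalized ranked posets and let P = (Q_1)^{i_1} × ··· × (Q_r)^{i_r}. Let σ be the automorphism of P which cyclically permutes the i_j copies of Q_j in each block. Then the Möbius polynomial of the fixed-point subposet is M_{P^σ}(z) = ∏_{j=1}^r M_{Q_j}(z^{i_j}). -/

import Mathlib

open Finset Polynomial

/-- The Möbius polynomial `M_P(z) = Σ_{p ≤ q} μ(p,q) z^{|q|-|p|}` of a finite poset with a
rank function `rk` (terms with `¬ p ≤ q` vanish since `μ(p,q) = 0` there). -/
noncomputable def mobiusPoly (P : Type*) [PartialOrder P] [Fintype P] [DecidableEq P]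
    [LocallyFiniteOrder P] (rk : P → ℕ) : Polynomial ℤ :=
  ∑ p : P, ∑ q : P, IncidenceAlgebra.mu ℤ p q • (X : Polynomial ℤ) ^ (rk q - rk p)

/-- `rk` is a generalized rank function: `rk p = 0` iff `p` is minimal, and `rk` is
strictly monotone. -/
def IsGenRank {P : Type*} [PartialOrder P] (rk : P → ℕ) : Prop :=
  (∀ p : P, rk p = 0 ↔ IsMin p) ∧ ∀ p q : P, p < q → rk p < rk q

instance piDecidableLE {ι : Type*} [Fintype ι] {α : ι → Type*} [∀ i, Preorder (α i)]
    [∀ i, DecidableRel (α := α i) (· ≤ ·)] : DecidableRel (α := ∀ i, α i) (· ≤ ·) :=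
  fun a b => by change Decidable (∀ i, a i ≤ b i); infer_instance

instance subtypeDecidableLE {α : Type*} [Preorder α] [DecidableRel (α := α) (· ≤ ·)]
    {p : α → Prop} : DecidableRel (α := Subtype p) (· ≤ ·) :=
  fun a b => decidable_of_iff ((a : α) ≤ (b : α)) Subtype.coe_le_coe

instance preorderDecidableLT {α : Type*} [Preorder α] [DecidableRel (α := α) (· ≤ ·)] :
    DecidableRel (α := α) (· < ·) :=
  fun a b => decidable_of_iff (a ≤ b ∧ ¬ b ≤ a) lt_iff_le_not_ge.symm

/-!
A point of `P` fixed by the block rotation is constant on each block, so `P^σ` is isomorphic,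
as a poset, to `∏ⱼ Q_j`, the rank of the constant tuple with value `q` on block `j` being
`i_j |q|`. The Möbius function is invariant under order isomorphisms and multiplicative on
products, so `M` is multiplicative on products of posets with monotone ranks (monotonicity
makes the truncated exponents `|q| - |p|` additive for `p ≤ q`). Scaling a rank by `i`
substitutes `z ↦ z^i`.
-/

lemma OrderIso.map_finsetIcc {α β : Type*} [Preorder α] [Preorder β]
    [LocallyFiniteOrder α] [LocallyFiniteOrder β] (e : α ≃o β) (a b : α) :
    (Icc a b).map e.toEquiv.toEmbedding = Icc (e a) (e b) := by
  ext y
  simp [e.le_symm_apply, e.symm_apply_le]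

namespace IncidenceAlgebra

lemma mu_orderIso (𝕜 : Type*) [Ring 𝕜] {α β : Type*} [PartialOrder α] [PartialOrder β]
    [LocallyFiniteOrder α] [LocallyFiniteOrder β] [DecidableEq α] [DecidableEq β]
    (e : α ≃o β) (a b : α) : mu 𝕜 (e a) (e b) = mu 𝕜 a b := by
  let : DecidableLE α := Classical.decRel _
  let mue : IncidenceAlgebra 𝕜 α :=
    ⟨fun a b => mu 𝕜 (e a) (e b), fun a b h => apply_eq_zero_of_not_le (by simpa using h) _⟩
  suffices mue = mu 𝕜 by rw [← this]; rfl
  refine left_inv_eq_right_inv ?_ zeta_mul_mu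
  ext a b
  simp only [mul_apply, zeta_apply, mul_boole, one_apply]
  calc ∑ x ∈ Icc a b, (if x ≤ b then mue a x else 0)
      = ∑ x ∈ Icc a b, mu 𝕜 (e a) (e x) :=
        sum_congr rfl fun x hx => if_pos (mem_Icc.1 hx).2
    _ = ∑ y ∈ Icc (e a) (e b), mu 𝕜 (e a) y := by rw [← e.map_finsetIcc, sum_map]; rfl
    _ = if e a = e b then 1 else 0 := sum_Icc_mu_right ..
    _ = if a = b then 1 else 0 := by simp

end IncidenceAlgebra

open IncidenceAlgebra

lemma mobiusPoly_congr_orderIso {α β : Type*} [PartialOrder α] [PartialOrder β]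
    [Fintype α] [Fintype β] [DecidableEq α] [DecidableEq β]
    [LocallyFiniteOrder α] [LocallyFiniteOrder β]
    (e : α ≃o β) (ra : α → ℕ) (rb : β → ℕ) (h : ∀ a, rb (e a) = ra a) :
    mobiusPoly α ra = mobiusPoly β rb := by
  refine Fintype.sum_equiv e.toEquiv _ _ fun p => Fintype.sum_equiv e.toEquiv _ _ fun q => ?_
  simp only [RelIso.coe_fn_toEquiv, mu_orderIso, h]

lemma mobiusPoly_prod {α β : Type*} [PartialOrder α] [PartialOrder β] [Fintype α] [Fintype β]
    [DecidableEq α] [DecidableEq β] [LocallyFiniteOrder α] [LocallyFiniteOrder β]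
    [DecidableLE α] [DecidableLE β]
    {ra : α → ℕ} {rb : β → ℕ} (ha : Monotone ra) (hb : Monotone rb) :
    mobiusPoly (α × β) (fun y => ra y.1 + rb y.2) = mobiusPoly α ra * mobiusPoly β rb := by
  simp only [mobiusPoly, sum_mul_sum, Fintype.sum_prod_type]
  refine sum_congr rfl fun p₁ _ => sum_congr rfl fun p₂ _ =>
    sum_congr rfl fun q₁ _ => sum_congr rfl fun q₂ _ => ?_
  have hmu : mu ℤ (p₁, p₂) (q₁, q₂) = mu ℤ p₁ q₁ * mu ℤ p₂ q₂ := by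
    rw [← mu_prod_mu]; rfl
  rw [hmu, smul_mul_smul_comm, ← pow_add]
  by_cases h₁ : p₁ ≤ q₁
  · by_cases h₂ : p₂ ≤ q₂
    · have := ha h₁; have := hb h₂
      congr 2
      omega
    · simp [apply_eq_zero_of_not_le h₂]
  · simp [apply_eq_zero_of_not_le h₁]

lemma mobiusPoly_pi {n : ℕ} (Q : Fin n → Type*) [∀ j, PartialOrder (Q j)]
    [∀ j, Fintype (Q j)] [∀ j, DecidableEq (Q j)] [∀ j, LocallyFiniteOrder (Q j)]
    [∀ j, DecidableLE (Q j)] (rk : ∀ j, Q j → ℕ) (hrk : ∀ j, Monotone (rk j)) :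
    mobiusPoly (∀ j, Q j) (fun y => ∑ j, rk j (y j)) = ∏ j, mobiusPoly (Q j) (rk j) := by
  induction n with
  | zero => simp [mobiusPoly, univ_unique]
  | succ n ih =>
    have htail : Monotone fun t : ∀ j : Fin n, Q j.succ => ∑ j, rk j.succ (t j) :=
      fun _ _ h => sum_le_sum fun j _ => hrk j.succ (h j)
    rw [← mobiusPoly_congr_orderIso (Fin.consOrderIso Q)
        (fun p => rk 0 p.1 + ∑ j : Fin n, rk j.succ (p.2 j)) _
        (fun p => by simp [Fin.sum_univ_succ]),
      mobiusPoly_prod (hrk 0) htail, ih _ _ fun j => hrk j.succ, Fin.prod_univ_succ]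

lemma mobiusPoly_comp_X_pow (P : Type*) [PartialOrder P] [Fintype P] [DecidableEq P]
    [LocallyFiniteOrder P] (rk : P → ℕ) (m : ℕ) :
    (mobiusPoly P rk).comp (X ^ m) = mobiusPoly P (fun a => m * rk a) := by
  simp only [mobiusPoly, Polynomial.sum_comp, smul_comp, pow_comp, X_comp, ← pow_mul, mul_tsub]

lemma eq_of_comp_finRotate {n : ℕ} {α : Type*} {x : Fin n → α}
    (hx : ∀ l, x (finRotate n l) = x l) (l l' : Fin n) : x l = x l' := by
  cases n with
  | zero => exact l.elim0
  | succ m =>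
    suffices ∀ l, x l = x 0 by rw [this l, this l']
    intro l
    induction l using Fin.induction with
    | zero => rfl
    | succ l ih => rw [← Fin.coeSucc_eq_succ, ← finRotate_apply, hx, ih]

def finRotateFixedOrderIso {ι : Type*} (Q : ι → Type*) [∀ j, PartialOrder (Q j)]
    (i : ι → ℕ) (hi : ∀ j, 0 < i j) :
    {x : ∀ j, Fin (i j) → Q j // ∀ j l, x j (finRotate (i j) l) = x j l} ≃o ∀ j, Q j where
  toFun x j := x.1 j ⟨0, hi j⟩
  invFun y := ⟨fun j _ => y j, fun _ _ => rfl⟩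
  left_inv x := Subtype.ext <| funext fun j => funext fun l => eq_of_comp_finRotate (x.2 j) _ _
  right_inv _ := rfl
  map_rel_iff' {x y} := by
    refine ⟨fun h j l => ?_, fun h j => h j _⟩
    rw [eq_of_comp_finRotate (x.2 j) l ⟨0, hi j⟩, eq_of_comp_finRotate (y.2 j) l ⟨0, hi j⟩]
    exact h j

/-- Let `P = (Q₁)^{i₁} × ⋯ × (Q_r)^{i_r}` for finite generalized ranked
posets `Q_j`, and let `σ` be the automorphism of `P` cyclically permuting the `i_j` copies
of `Q_j` in each block.  The Möbius polynomial of the fixed-point subposet is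
`M_{P^σ}(z) = ∏_j M_{Q_j}(z^{i_j})`. -/
theorem mobiusPoly_fixed_points (r : ℕ) (Q : Fin r → Type*) [∀ j, PartialOrder (Q j)]
    [∀ j, Fintype (Q j)] [∀ j, DecidableEq (Q j)] [∀ j, LocallyFiniteOrder (Q j)]
    [∀ j, DecidableRel (α := Q j) (· ≤ ·)]
    (rk : ∀ j, Q j → ℕ) (hrk : ∀ j, IsGenRank (rk j))
    (i : Fin r → ℕ) (hi : ∀ j, 0 < i j) :
    mobiusPoly {x : ∀ j, Fin (i j) → Q j // ∀ j l, x j (finRotate (i j) l) = x j l}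
        (fun x => ∑ j, ∑ l, rk j (x.1 j l)) =
      ∏ j, (mobiusPoly (Q j) (rk j)).comp (X ^ i j) := by
  have hmono : ∀ j, Monotone fun a => i j * rk j a := fun j =>
    (StrictMono.monotone fun _ _ h => (hrk j).2 _ _ h).const_mul' (i j)
  have hrank : ∀ x : {x : ∀ j, Fin (i j) → Q j // ∀ j l, x j (finRotate (i j) l) = x j l},
      ∑ j, i j * rk j (finRotateFixedOrderIso Q i hi x j) = ∑ j, ∑ l, rk j (x.1 j l) :=
    fun x => sum_congr rfl fun j _ => by
      simp [eq_of_comp_finRotate (x.2 j) _ ⟨0, hi j⟩, finRotateFixedOrderIso]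
  rw [mobiusPoly_congr_orderIso (finRotateFixedOrderIso Q i hi) _
    (fun y => ∑ j, i j * rk j (y j)) hrank, mobiusPoly_pi Q _ hmono]
  simp only [mobiusPoly_comp_X_pow]
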